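/- Let E be a complex Hilbert space and let C₁, C₂ : E → E* be bounded operators with positive constants c₁, c₂ such that Re⟨C₁x,x⟩ ≥ c₁‖x‖², Im⟨C₁x,x⟩ ≤ 0, and Re⟨C₂x,x⟩ - Im⟨C₂x,x⟩ ≥ c₂‖x‖² for all x ∈ E. Then C₁ + C₂ is coercive in modulus: |⟨(C₁+C₂)x, x⟩| ≥ ((c₁+c₂)/√2)‖x‖² for all x ∈ E. -/

import Mathlib

/-! Adding the hypotheses gives `c₁‖x‖² + c₂‖x‖² ≤ Re z - Im z` for `z = ⟨(C₁+C₂)x, x⟩`, and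
`Re z - Im z = Re ((1 + i) z) ≤ |1 + i| |z| = √2 |z|`. -/

theorem Complex.norm_one_add_I : ‖(1 + Complex.I : ℂ)‖ = √2 := by
  rw [Complex.norm_def, Complex.normSq_apply]
  norm_num

theorem Complex.re_sub_im_le_sqrt_two_mul_norm (z : ℂ) : z.re - z.im ≤ √2 * ‖z‖ := by
  have hrot : ((1 + Complex.I) * z).re = z.re - z.im := by simp
  calc z.re - z.im = ((1 + Complex.I) * z).re := hrot.symm
    _ ≤ ‖(1 + Complex.I) * z‖ := Complex.re_le_norm _
    _ = √2 * ‖z‖ := by rw [norm_mul, Complex.norm_one_add_I]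

theorem stmt_4_general (E : Type*) [NormedAddCommGroup E] [InnerProductSpace ℂ E]
    (C₁ C₂ : E →L[ℂ] (E →L⋆[ℂ] ℂ)) (c₁ c₂ : ℝ)
    (hRe₁ : ∀ x : E, c₁ * ‖x‖ ^ 2 ≤ (C₁ x x).re)
    (hIm₁ : ∀ x : E, (C₁ x x).im ≤ 0)
    (h₂ : ∀ x : E, c₂ * ‖x‖ ^ 2 ≤ (C₂ x x).re - (C₂ x x).im) :
    ∀ x : E, ((c₁ + c₂) / Real.sqrt 2) * ‖x‖ ^ 2 ≤ ‖(C₁ + C₂) x x‖ := by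
  intro x
  have hsum : (c₁ + c₂) * ‖x‖ ^ 2 ≤ ((C₁ + C₂) x x).re - ((C₁ + C₂) x x).im := by
    simp only [add_apply, Complex.add_re, Complex.add_im]
    linarith [hRe₁ x, hIm₁ x, h₂ x]
  rw [div_mul_eq_mul_div, div_le_iff₀ (by positivity), mul_comm _ √2]
  exact hsum.trans (Complex.re_sub_im_le_sqrt_two_mul_norm _)

/-- Combination of sign conditions: if `Re⟨C₁x,x⟩ ≥ c₁‖x‖²`, `Im⟨C₁x,x⟩ ≤ 0` and
`Re⟨C₂x,x⟩ - Im⟨C₂x,x⟩ ≥ c₂‖x‖²`, then `C₁ + C₂` is coercive in modulus with constant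
`(c₁+c₂)/√2`. -/
theorem stmt_4 (E : Type*) [NormedAddCommGroup E] [InnerProductSpace ℂ E] [CompleteSpace E]
    (C₁ C₂ : E →L[ℂ] (E →L⋆[ℂ] ℂ)) (c₁ c₂ : ℝ) (hc₁ : 0 < c₁) (hc₂ : 0 < c₂)
    (hRe₁ : ∀ x : E, c₁ * ‖x‖ ^ 2 ≤ (C₁ x x).re)
    (hIm₁ : ∀ x : E, (C₁ x x).im ≤ 0)
    (h₂ : ∀ x : E, c₂ * ‖x‖ ^ 2 ≤ (C₂ x x).re - (C₂ x x).im) :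
    ∀ x : E, ((c₁ + c₂) / Real.sqrt 2) * ‖x‖ ^ 2 ≤ ‖(C₁ + C₂) x x‖ :=
  stmt_4_general E C₁ C₂ c₁ c₂ hRe₁ hIm₁ h₂
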